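/- arXiv:1807.10233 — 3 statements merged into one kernel-verified Lean document; each statement's English description precedes it below -/
import Mathlib

section
/- Suppose p < n and Z ∈ ℝ^{p×p} satisfies the system arising from the Lagrange conditions: Λ = −(n − (p+1)/2 − (1/2)trace Z)·Z + ((p+2)/2)·Z Zᵀ is symmetric and Ξ = Λᵀ is symmetric, with trace Z ≤ p. Then Z itself is symmetric. -/
open Matrix

/-- If `p < n`, `trace Z ≤ p`, and the Lagrange-multiplier matrix
`Λ = −(n − (p+1)/2 − (1/2)trace Z)·Z + ((p+2)/2)·Z Zᵀ` is symmetric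
(equivalently `Ξ = Λᵀ` is symmetric), then `Z` itself is symmetric. -/
theorem lagrange_multiplier_symmetric_implies_Z_symmetric (n p : ℕ) (hpn : p < n)
    (Z : Matrix (Fin p) (Fin p) ℝ) (htr : Z.trace ≤ (p : ℝ))
    (L : Matrix (Fin p) (Fin p) ℝ)
    (hL : L = (-((n : ℝ) - ((p : ℝ) + 1)/2 - (1/2) * Z.trace)) • Z
        + (((p : ℝ) + 2)/2) • (Z * Zᵀ))
    (hLsym : Lᵀ = L) :
    Zᵀ = Z := by
  set c : ℝ := -((n : ℝ) - ((p : ℝ) + 1)/2 - (1/2) * Z.trace) with hc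
  have hn : (p : ℝ) + 1 ≤ (n : ℝ) := by exact_mod_cast hpn
  have hcne : c ≠ 0 := by
    have : c < 0 := by
      rw [hc]; nlinarith
    linarith
  have hsym : (Z * Zᵀ)ᵀ = Z * Zᵀ := by
    rw [transpose_mul, transpose_transpose]
  have h : c • Zᵀ + (((p : ℝ) + 2)/2) • (Z * Zᵀ)
      = c • Z + (((p : ℝ) + 2)/2) • (Z * Zᵀ) := by
    have := hLsym
    rw [hL] at this
    simpa [transpose_add, transpose_smul, hsym] using this
  have h2 : c • Zᵀ = c • Z := by
    exact add_right_cancel h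
  have := congrArg (fun M => c⁻¹ • M) h2
  simpa [smul_smul, inv_mul_cancel₀ hcne] using this
end

section
/- Let p < n and Z be a p×p real symmetric matrix with spectrum contained in {−1, λ*, 1} where λ* = (2n − p − 1 − trace Z)/(p+2) and ‖Z‖₂ ≤ 1. If n > (3/2)(p+1) and the eigenvalue −1 has multiplicity m₋ = 0, then the objective g = (n − (p+1)/2)·trace Z − ((p+2)/4)·trace(Z²) − (1/4)·(trace Z)² + (1−n+p)p equals (1/2)(n − (3/2)(p+1))(trace Z − p), which is ≤ 0 with equality iff trace Z = p (i.e., Z = I). -/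
set_option synthInstance.maxHeartbeats 800000
open Matrix RealInnerProductSpace

/-- When the eigenvalue `−1` does not occur (`m₋ = 0`, encoded by the minimal
polynomial relation `Z² = −λ* I + (1+λ*)Z`), with `‖Z‖₂ ≤ 1`,
`λ* = (2n − p − 1 − trace Z)/(p+2)` and `n > (3/2)(p+1)`, the objective
`g = (n − (p+1)/2)·trace Z − ((p+2)/4)·trace Z² − (1/4)(trace Z)² + (1−n+p)p`
equals `(1/2)(n − (3/2)(p+1))(trace Z − p)`, is nonpositive, and vanishes
exactly when `trace Z = p`. -/
theorem objective_factorization_and_sign (n p : ℕ) (hpn : p < n)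
    (hn : (3 : ℝ)/2 * ((p : ℝ) + 1) < (n : ℝ))
    (Z : Matrix (Fin p) (Fin p) ℝ) (hZsym : Zᵀ = Z)
    (hnorm : ‖Matrix.toEuclideanCLM (𝕜 := ℝ) Z‖ ≤ 1)
    (lam : ℝ) (hlam : lam = (2 * (n : ℝ) - (p : ℝ) - 1 - Z.trace) / ((p : ℝ) + 2))
    (hmin : Z * Z = (-lam) • (1 : Matrix (Fin p) (Fin p) ℝ) + (1 + lam) • Z) :
    (((n : ℝ) - ((p : ℝ) + 1)/2) * Z.trace - (((p : ℝ) + 2)/4) * (Z * Z).trace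
        - (1/4) * (Z.trace)^2 + (1 - (n : ℝ) + (p : ℝ)) * (p : ℝ)
      = (1/2) * ((n : ℝ) - (3/2) * ((p : ℝ) + 1)) * (Z.trace - (p : ℝ))) ∧
    (((n : ℝ) - ((p : ℝ) + 1)/2) * Z.trace - (((p : ℝ) + 2)/4) * (Z * Z).trace
        - (1/4) * (Z.trace)^2 + (1 - (n : ℝ) + (p : ℝ)) * (p : ℝ) ≤ 0) ∧
    (((n : ℝ) - ((p : ℝ) + 1)/2) * Z.trace - (((p : ℝ) + 2)/4) * (Z * Z).trace
        - (1/4) * (Z.trace)^2 + (1 - (n : ℝ) + (p : ℝ)) * (p : ℝ) = 0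
      ↔ Z.trace = (p : ℝ)) := by
  have hp2 : ((p : ℝ) + 2) ≠ 0 := by positivity
  -- trace of Z²
  have htr2 : (Z * Z).trace = -lam * (p : ℝ) + (1 + lam) * Z.trace := by
    rw [hmin]
    simp [trace_add, trace_smul, trace_one, smul_eq_mul]
  -- diagonal entries ≤ 1
  have hdiag : ∀ i, Z i i ≤ 1 := by
    intro i
    set T := Matrix.toEuclideanCLM (𝕜 := ℝ) Z
    set e : EuclideanSpace ℝ (Fin p) := EuclideanSpace.single i 1
    have he : ‖e‖ = 1 := by simp [e]
    have h1 : (T e) i = Z i i := by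
      have : T ((WithLp.equiv _ _).symm (Pi.single i 1)) =
          (WithLp.equiv _ _).symm (Z *ᵥ Pi.single i 1) :=
        Matrix.toEuclideanCLM_toLp Z _
      have he' : e = (WithLp.equiv _ _).symm (Pi.single i 1) := rfl
      rw [he', this]
      simp [Matrix.mulVec_single]
    have h2 : (inner ℝ e (T e) : ℝ) = (T e) i := by
      simp [e, EuclideanSpace.inner_single_left]
    have hb : ‖T e‖ ≤ 1 := by
      calc ‖T e‖ ≤ ‖T‖ * ‖e‖ := ContinuousLinearMap.le_opNorm T e
        _ ≤ 1 := by rw [he]; simpa using hnorm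
    have habs : |(inner ℝ e (T e) : ℝ)| ≤ 1 := by
      calc |(inner ℝ e (T e) : ℝ)| ≤ ‖e‖ * ‖T e‖ := abs_real_inner_le_norm e (T e)
        _ ≤ 1 := by rw [he, one_mul]; exact hb
    rw [h2, h1] at habs
    linarith [abs_le.mp habs]
  have htrle : Z.trace ≤ (p : ℝ) := by
    have : Z.trace = ∑ i, Z i i := rfl
    rw [this]
    calc ∑ i, Z i i ≤ ∑ _i : Fin p, (1 : ℝ) := Finset.sum_le_sum fun i _ => hdiag i
      _ = (p : ℝ) := by simp
  have heq : ((n : ℝ) - ((p : ℝ) + 1)/2) * Z.trace - (((p : ℝ) + 2)/4) * (Z * Z).trace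
        - (1/4) * (Z.trace)^2 + (1 - (n : ℝ) + (p : ℝ)) * (p : ℝ)
      = (1/2) * ((n : ℝ) - (3/2) * ((p : ℝ) + 1)) * (Z.trace - (p : ℝ)) := by
    rw [htr2, hlam]
    field_simp
    ring
  refine ⟨heq, ?_, ?_⟩
  · rw [heq]; nlinarith
  · rw [heq]
    constructor
    · intro h
      have hc : (0:ℝ) < (1/2) * ((n : ℝ) - (3/2) * ((p : ℝ) + 1)) := by nlinarith
      have := mul_eq_zero.mp h
      rcases this with h' | h'
      · exact absurd h' (ne_of_gt hc)
      · linarith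
    · intro h; rw [h]; ring
end

section
/- For X, Y ∈ St(p,n) with p ≤ (2/3)n − 1, the function f(X,Y) = (n − (p+1)/2)⟨X,Y⟩ − ((p+2)/4)‖XᵀY‖² − (1/4)⟨X,Y⟩² + (1−n+p)p satisfies f(X,Y) ≤ 0, where the bound is attained when X = Y. -/
open Matrix

lemma trace_transpose_mul_eq_sum {m k : Type*} [Fintype m] [Fintype k]
    (A B : Matrix m k ℝ) : (Aᵀ * B).trace = ∑ i, ∑ j, A j i * B j i := by
  simp [Matrix.trace, Matrix.diag, Matrix.mul_apply, Matrix.transpose_apply]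

lemma trace_transpose_mul_self_nonneg {m k : Type*} [Fintype m] [Fintype k]
    (A : Matrix m k ℝ) : 0 ≤ (Aᵀ * A).trace := by
  rw [trace_transpose_mul_eq_sum]
  exact Finset.sum_nonneg fun i _ => Finset.sum_nonneg fun j _ => mul_self_nonneg _

/-- For `X, Y ∈ St(p,n)` with `p ≤ (2/3)n − 1`, the function
`f(X,Y) = (n − (p+1)/2)⟨X,Y⟩ − ((p+2)/4)‖XᵀY‖² − (1/4)⟨X,Y⟩² + (1−n+p)p`
is nonpositive, and it vanishes when `X = Y`. -/
theorem stiefel_f_nonpositive (n p : ℕ) (hpn : (p : ℝ) ≤ (2 : ℝ)/3 * (n : ℝ) - 1)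
    (X Y : Matrix (Fin n) (Fin p) ℝ) (hX : Xᵀ * X = 1) (hY : Yᵀ * Y = 1) :
    ((n : ℝ) - ((p : ℝ) + 1)/2) * (Xᵀ * Y).trace
        - (((p : ℝ) + 2)/4) * ((Xᵀ * Y)ᵀ * (Xᵀ * Y)).trace
        - (1/4) * ((Xᵀ * Y).trace)^2
        + (1 - (n : ℝ) + (p : ℝ)) * (p : ℝ) ≤ 0 ∧
    (X = Y →
      ((n : ℝ) - ((p : ℝ) + 1)/2) * (Xᵀ * Y).trace
        - (((p : ℝ) + 2)/4) * ((Xᵀ * Y)ᵀ * (Xᵀ * Y)).trace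
        - (1/4) * ((Xᵀ * Y).trace)^2
        + (1 - (n : ℝ) + (p : ℝ)) * (p : ℝ) = 0) := by
  have htrX : (Xᵀ * X).trace = (p : ℝ) := by rw [hX]; simp
  have htrY : (Yᵀ * Y).trace = (p : ℝ) := by rw [hY]; simp
  -- t ≤ p
  have ht_le : (Xᵀ * Y).trace ≤ (p : ℝ) := by
    have h0 : 0 ≤ ((X - Y)ᵀ * (X - Y)).trace := trace_transpose_mul_self_nonneg _
    have hexp : ((X - Y)ᵀ * (X - Y)).trace
        = (Xᵀ * X).trace - (Xᵀ * Y).trace - (Yᵀ * X).trace + (Yᵀ * Y).trace := by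
      rw [Matrix.transpose_sub, Matrix.sub_mul, Matrix.mul_sub, Matrix.mul_sub]
      simp [Matrix.trace_sub]
      ring
    have hsym : (Yᵀ * X).trace = (Xᵀ * Y).trace := by
      rw [← Matrix.trace_transpose (Yᵀ * X), Matrix.transpose_mul, Matrix.transpose_transpose]
    rw [hexp, hsym, htrX, htrY] at h0
    linarith
  -- s ≥ 0
  have hs0 : 0 ≤ ((Xᵀ * Y)ᵀ * (Xᵀ * Y)).trace := trace_transpose_mul_self_nonneg _
  -- t² ≤ p s
  have hcs : ((Xᵀ * Y).trace) ^ 2 ≤ (p : ℝ) * ((Xᵀ * Y)ᵀ * (Xᵀ * Y)).trace := by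
    set M := Xᵀ * Y with hMdef
    have h1 : M.trace = ∑ i, M i i := rfl
    have h2 : (Mᵀ * M).trace = ∑ i, ∑ j, M j i * M j i := trace_transpose_mul_eq_sum M M
    have hchev : (∑ i, M i i) ^ 2 ≤ ((Fintype.card (Fin p)) : ℝ) * ∑ i, M i i ^ 2 := by
      exact_mod_cast sq_sum_le_card_mul_sum_sq (s := (Finset.univ : Finset (Fin p)))
        (f := fun i => M i i)
    have hdiag : ∑ i, M i i ^ 2 ≤ ∑ i, ∑ j, M j i * M j i := by
      apply Finset.sum_le_sum
      intro i _
      calc M i i ^ 2 = M i i * M i i := by ring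
        _ ≤ ∑ j, M j i * M j i :=
          Finset.single_le_sum (fun j _ => mul_self_nonneg (M j i)) (Finset.mem_univ i)
    have hcard : ((Fintype.card (Fin p)) : ℝ) = (p : ℝ) := by simp
    rw [h1, h2]
    calc (∑ i, M i i) ^ 2 ≤ ((Fintype.card (Fin p)) : ℝ) * ∑ i, M i i ^ 2 := hchev
      _ = (p : ℝ) * ∑ i, M i i ^ 2 := by rw [hcard]
      _ ≤ (p : ℝ) * ∑ i, ∑ j, M j i * M j i :=
        mul_le_mul_of_nonneg_left hdiag (Nat.cast_nonneg p)
  constructor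
  · rcases Nat.eq_zero_or_pos p with hp | hp
    · subst hp
      have ht0 : (Xᵀ * Y).trace = 0 := by
        simp [Matrix.trace]
      rw [ht0]
      push_cast
      nlinarith [hs0]
    · have hp1 : (1 : ℝ) ≤ (p : ℝ) := by exact_mod_cast hp
      set t := (Xᵀ * Y).trace with hT
      set s := ((Xᵀ * Y)ᵀ * (Xᵀ * Y)).trace with hS
      have h1 : (0 : ℝ) ≤ ((p : ℝ) + 2) * ((p : ℝ) * s - t ^ 2) :=
        mul_nonneg (by positivity) (by linarith)
      have h2 : (0 : ℝ) ≤ ((p : ℝ) + 1) * ((p : ℝ) - t) ^ 2 :=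
        mul_nonneg (by positivity) (sq_nonneg _)
      have h3 : (0 : ℝ) ≤ (p : ℝ) * (((p : ℝ) - t) * (2 * (n : ℝ) - 3 * (p : ℝ) - 3)) :=
        mul_nonneg (by positivity) (mul_nonneg (by linarith) (by linarith))
      nlinarith [h1, h2, h3, hp1]
  · intro hXY
    subst hXY
    rw [hX]
    simp only [Matrix.transpose_one, Matrix.one_mul, Matrix.trace_one, Fintype.card_fin]
    ring
end
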